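/- There exist constants C₁, C₂ > 0 such that for every measurable set B ⊆ ℝ^d of finite Lebesgue measure, C₁·min{|B|^{1/p^-}, |B|^{1/q^+}} ≤ ‖χ_B‖_{L^H} ≤ C₂·max{|B|^{1/p^-}, |B|^{1/q^+}}, where χ_B is the indicator function of B and |B| denotes Lebesgue measure. -/

import Mathlib

open MeasureTheory Real Filter Topology
open scoped ENNReal

noncomputable section

noncomputable def gmodular {d : ℕ} (Φ : EuclideanSpace ℝ (Fin d) → ℝ → ℝ)
    (u : EuclideanSpace ℝ (Fin d) → ℝ) : ℝ≥0∞ :=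
  ∫⁻ x, ENNReal.ofReal (Φ x (|u x|))

noncomputable def luxNorm {d : ℕ} (Φ : EuclideanSpace ℝ (Fin d) → ℝ → ℝ)
    (u : EuclideanSpace ℝ (Fin d) → ℝ) : ℝ :=
  sInf {l : ℝ | 0 < l ∧ (∫⁻ x, ENNReal.ofReal (Φ x (|u x| / l))) ≤ 1}

/-! The exponents lie in `[p⁻, q⁺]` for a.e. `x`, so `h(x, s)` is squeezed between single powers
of `s`, and integrating gives
`(q⁺)⁻¹ min (u ^ p⁻, u ^ q⁺) ≤ H(x, u) ≤ (1 + sup μ) (u ^ p⁻ + u ^ q⁺)`.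
Since `H(x, 0) = 0`, the modular of `χ_B / λ` is the integral of `H(x, λ⁻¹)` over `B`, and these
bounds pin down which `λ` are admissible in the Luxemburg norm up to constants. -/

open Set

section RpowBetweenExponents

variable {s a b r : ℝ}

lemma rpow_le_add_rpow_of_mem_Icc (hs : 0 < s) (hr : r ∈ Icc a b) : s ^ r ≤ s ^ a + s ^ b := by
  rcases le_total s 1 with hs1 | hs1
  · linarith [rpow_le_rpow_of_exponent_ge hs hs1 hr.1, rpow_nonneg hs.le b]
  · linarith [rpow_le_rpow_of_exponent_le hs1 hr.2, rpow_nonneg hs.le a]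

lemma min_rpow_le_rpow_of_mem_Icc (hs : 0 < s) (hr : r ∈ Icc a b) :
    min (s ^ a) (s ^ b) ≤ s ^ r := by
  rcases le_total s 1 with hs1 | hs1
  · exact (min_le_right _ _).trans (rpow_le_rpow_of_exponent_ge hs hs1 hr.2)
  · exact (min_le_left _ _).trans (rpow_le_rpow_of_exponent_le hs1 hr.1)

/-- On `[0, u]`, this bounds every `s ^ r` below by one and the same integrable power of `s`. -/
lemma min_rpow_mul_div_rpow_le_rpow {u : ℝ} (hs : 0 < s) (hsu : s ≤ u) (hr : r ∈ Icc a b) :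
    min (u ^ a) (u ^ b) * (s / u) ^ b ≤ s ^ r := by
  have hu : 0 < u := hs.trans_le hsu
  have hsu' : s / u ≤ 1 := (div_le_one hu).2 hsu
  calc min (u ^ a) (u ^ b) * (s / u) ^ b ≤ u ^ r * (s / u) ^ r :=
        mul_le_mul (min_rpow_le_rpow_of_mem_Icc hu hr)
          (rpow_le_rpow_of_exponent_ge (div_pos hs hu) hsu' hr.2) (by positivity) (by positivity)
    _ = s ^ r := by rw [← mul_rpow hu.le (by positivity), mul_div_cancel₀ s hu.ne']

end RpowBetweenExponents

/-- The integrand `h(x, ·)` of `H(x, ·)`, for the exponents `P = p x`, `Q = q x` and weight `m = μ x`. -/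
def phaseDensity (P Q : ℝ → ℝ) (m s : ℝ) : ℝ := s ^ (P s - 1) + m * s ^ (Q s - 1)

section PhaseDensity

variable {P Q : ℝ → ℝ} {m M pm qp : ℝ}

lemma continuousOn_phaseDensity (hPc : ContinuousOn P (Ici 0)) (hQc : ContinuousOn Q (Ici 0))
    (hP : ∀ t, 0 ≤ t → 1 < P t) (hQ : ∀ t, 0 ≤ t → 1 < Q t) :
    ContinuousOn (phaseDensity P Q m) (Ici 0) := fun t ht =>
  (continuousWithinAt_id.rpow ((hPc t ht).sub continuousWithinAt_const)
      (Or.inr (sub_pos.2 (hP t ht)))).add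
    (continuousWithinAt_const.mul (continuousWithinAt_id.rpow
      ((hQc t ht).sub continuousWithinAt_const) (Or.inr (sub_pos.2 (hQ t ht)))))

lemma phaseDensity_le (hm : 0 ≤ m) (hmM : m ≤ M) {s : ℝ} (hs : 0 < s)
    (hP : P s ∈ Icc pm qp) (hQ : Q s ∈ Icc pm qp) :
    phaseDensity P Q m s ≤ (1 + M) * (s ^ (pm - 1) + s ^ (qp - 1)) := by
  have hsub : ∀ {r}, r ∈ Icc pm qp → r - 1 ∈ Icc (pm - 1) (qp - 1) := fun hr =>
    ⟨sub_le_sub_right hr.1 1, sub_le_sub_right hr.2 1⟩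
  calc s ^ (P s - 1) + m * s ^ (Q s - 1)
      ≤ (s ^ (pm - 1) + s ^ (qp - 1)) + M * (s ^ (pm - 1) + s ^ (qp - 1)) :=
        add_le_add (rpow_le_add_rpow_of_mem_Icc hs (hsub hP))
          (mul_le_mul hmM (rpow_le_add_rpow_of_mem_Icc hs (hsub hQ)) (rpow_nonneg hs.le _)
            (hm.trans hmM))
    _ = (1 + M) * (s ^ (pm - 1) + s ^ (qp - 1)) := by ring

lemma min_rpow_mul_div_rpow_le_phaseDensity (hm : 0 ≤ m) {s u : ℝ} (hs : 0 < s) (hsu : s ≤ u)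
    (hP : P s ∈ Icc pm qp) :
    min (u ^ (pm - 1)) (u ^ (qp - 1)) * (s / u) ^ (qp - 1) ≤ phaseDensity P Q m s := by
  have := min_rpow_mul_div_rpow_le_rpow hs hsu
    (show P s - 1 ∈ Icc (pm - 1) (qp - 1) from ⟨sub_le_sub_right hP.1 1, sub_le_sub_right hP.2 1⟩)
  unfold phaseDensity
  linarith [mul_nonneg hm (rpow_nonneg hs.le (Q s - 1))]

variable (hPc : ContinuousOn P (Ici 0)) (hQc : ContinuousOn Q (Ici 0)) (hpm : 1 < pm)
  (hP : ∀ t, 0 ≤ t → P t ∈ Icc pm qp) (hQ : ∀ t, 0 ≤ t → Q t ∈ Icc pm qp)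
include hPc hQc hpm hP hQ

lemma intervalIntegrable_phaseDensity {u : ℝ} (hu : 0 ≤ u) :
    IntervalIntegrable (phaseDensity P Q m) volume 0 u :=
  ((continuousOn_phaseDensity hPc hQc (fun t ht => hpm.trans_le (hP t ht).1)
      (fun t ht => hpm.trans_le (hQ t ht).1)).mono
    (by rw [uIcc_of_le hu]; exact Icc_subset_Ici_self)).intervalIntegrable

lemma integral_phaseDensity_le (hm : 0 ≤ m) (hmM : m ≤ M) {u : ℝ} (hu : 0 ≤ u) :
    ∫ s in (0 : ℝ)..u, phaseDensity P Q m s ≤ (1 + M) * (u ^ pm + u ^ qp) := by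
  have hqp : pm ≤ qp := (hP 0 le_rfl).1.trans (hP 0 le_rfl).2
  have hM : 0 ≤ 1 + M := by linarith
  have hint : ∀ r : ℝ, 1 < r → IntervalIntegrable (fun s : ℝ => s ^ (r - 1)) volume 0 u :=
    fun r hr => intervalIntegral.intervalIntegrable_rpow' (by linarith)
  have hpow : ∀ r : ℝ, 1 < r → ∫ s in (0 : ℝ)..u, s ^ (r - 1) = u ^ r / r := fun r hr => by
    rw [integral_rpow (Or.inl (by linarith)), sub_add_cancel, zero_rpow (by linarith), sub_zero]
  calc ∫ s in (0 : ℝ)..u, phaseDensity P Q m s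
      ≤ ∫ s in (0 : ℝ)..u, (1 + M) * (s ^ (pm - 1) + s ^ (qp - 1)) :=
        intervalIntegral.integral_mono_on_of_le_Ioo hu
          (intervalIntegrable_phaseDensity hPc hQc hpm hP hQ hu)
          (((hint pm hpm).add (hint qp (hpm.trans_le hqp))).const_mul _)
          fun s hs => phaseDensity_le hm hmM hs.1 (hP s hs.1.le) (hQ s hs.1.le)
    _ = (1 + M) * (u ^ pm / pm + u ^ qp / qp) := by
        rw [intervalIntegral.integral_const_mul,
          intervalIntegral.integral_add (hint pm hpm) (hint qp (hpm.trans_le hqp)),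
          hpow pm hpm, hpow qp (hpm.trans_le hqp)]
    _ ≤ (1 + M) * (u ^ pm + u ^ qp) := by
        gcongr
        · exact div_le_self (by positivity) hpm.le
        · exact div_le_self (by positivity) (hpm.le.trans hqp)

lemma le_integral_phaseDensity (hm : 0 ≤ m) {u : ℝ} (hu : 0 < u) :
    qp⁻¹ * min (u ^ pm) (u ^ qp) ≤ ∫ s in (0 : ℝ)..u, phaseDensity P Q m s := by
  have hqp : 1 < qp := hpm.trans_le ((hP 0 le_rfl).1.trans (hP 0 le_rfl).2)
  calc qp⁻¹ * min (u ^ pm) (u ^ qp)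
      = ∫ s in (0 : ℝ)..u, min (u ^ (pm - 1)) (u ^ (qp - 1)) * (s / u) ^ (qp - 1) := by
        rw [intervalIntegral.integral_const_mul,
          intervalIntegral.integral_comp_div (fun s => s ^ (qp - 1)) hu.ne',
          integral_rpow (Or.inl (by linarith)), zero_div, div_self hu.ne', sub_add_cancel,
          one_rpow, zero_rpow (by linarith), rpow_sub_one hu.ne', rpow_sub_one hu.ne',
          min_div_div_right hu.le, smul_eq_mul, sub_zero]
        field_simp
    _ ≤ ∫ s in (0 : ℝ)..u, phaseDensity P Q m s :=
        intervalIntegral.integral_mono_on_of_le_Ioo hu.le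
          (((continuous_id.div_const u).rpow_const
            fun _ => Or.inr (by linarith)).intervalIntegrable _ _ |>.const_mul _)
          (intervalIntegrable_phaseDensity hPc hQc hpm hP hQ hu.le)
          fun s hs => min_rpow_mul_div_rpow_le_phaseDensity hm hs.1 hs.2.le (hP s hs.1.le)

end PhaseDensity

section RpowScaling

variable {l r c V : ℝ}

lemma inv_rpow_mul_le_inv (hl : 0 < l) (hr : 1 ≤ r) (hc : 1 ≤ c) (hV : 0 ≤ V)
    (h : c * V ^ (1 / r) ≤ l) : (l⁻¹) ^ r * V ≤ c⁻¹ := by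
  have hc0 : 0 < c := one_pos.trans_le hc
  have hVl : V ≤ l ^ r / c :=
    calc V = (V ^ (1 / r)) ^ r := by
          rw [← rpow_mul hV, one_div_mul_cancel (by positivity), rpow_one]
      _ ≤ (l / c) ^ r := rpow_le_rpow (by positivity) ((le_div_iff₀' hc0).2 h) (by positivity)
      _ = l ^ r / c ^ r := div_rpow hl.le hc0.le r
      _ ≤ l ^ r / c := div_le_div_of_nonneg_left (by positivity) hc0 (self_le_rpow_of_one_le hc hr)
  rwa [inv_rpow hl.le, inv_mul_le_iff₀ (by positivity), ← div_eq_mul_inv]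

lemma rpow_one_div_mul_le_of_mul_inv_rpow_mul_le_one (hl : 0 < l) (hr : 0 < r) (hc : 0 ≤ c)
    (hV : 0 ≤ V) (h : c * (l⁻¹) ^ r * V ≤ 1) : c ^ (1 / r) * V ^ (1 / r) ≤ l := by
  have hlr : 0 < l ^ r := rpow_pos_of_pos hl r
  rw [← mul_rpow hc hV, one_div, rpow_inv_le_iff_of_pos (by positivity) hl.le hr]
  rw [inv_rpow hl.le] at h
  calc c * V = c * (l ^ r)⁻¹ * V * l ^ r := by field_simp
    _ ≤ l ^ r := by nlinarith

end RpowScaling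

section Luxemburg

variable {d : ℕ} {Φ : EuclideanSpace ℝ (Fin d) → ℝ → ℝ}

def luxAdmissible (Φ : EuclideanSpace ℝ (Fin d) → ℝ → ℝ) (u : EuclideanSpace ℝ (Fin d) → ℝ) :
    Set ℝ :=
  {l : ℝ | 0 < l ∧ (∫⁻ x, ENNReal.ofReal (Φ x (|u x| / l))) ≤ 1}

lemma luxNorm_eq_sInf (u : EuclideanSpace ℝ (Fin d) → ℝ) :
    luxNorm Φ u = sInf (luxAdmissible Φ u) := rfl

lemma luxNorm_le_of_Ioi_subset {u : EuclideanSpace ℝ (Fin d) → ℝ} {a : ℝ}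
    (h : Ioi a ⊆ luxAdmissible Φ u) : luxNorm Φ u ≤ a := by
  rw [luxNorm_eq_sInf, ← csInf_Ioi (a := a)]
  exact csInf_le_csInf ⟨0, fun l hl => hl.1.le⟩ nonempty_Ioi h

variable {B : Set (EuclideanSpace ℝ (Fin d))}

lemma lintegral_ofReal_indicator_div (hΦ0 : ∀ x, Φ x 0 = 0) (hB : MeasurableSet B) (l : ℝ) :
    ∫⁻ x, ENNReal.ofReal (Φ x (|B.indicator (fun _ => (1 : ℝ)) x| / l)) =
      ∫⁻ x in B, ENNReal.ofReal (Φ x l⁻¹) := by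
  rw [← lintegral_indicator hB]
  congr 1 with x
  by_cases hx : x ∈ B <;> simp [hx, hΦ0]

variable {a b : ℝ}

lemma Ioi_subset_luxAdmissible_indicator {C : ℝ} (ha : 1 ≤ a) (hb : 1 ≤ b) (hC : 1 ≤ C)
    (hΦ0 : ∀ x, Φ x 0 = 0) (hΦ : ∀ᵐ x, ∀ u, 0 < u → Φ x u ≤ C * (u ^ a + u ^ b))
    (hB : MeasurableSet B) (hBfin : volume B < ⊤) :
    Ioi (2 * C * max ((volume B).toReal ^ (1 / a)) ((volume B).toReal ^ (1 / b))) ⊆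
      luxAdmissible Φ (B.indicator fun _ => 1) := by
  set V := (volume B).toReal
  intro l hl
  have hl0 : 0 < l := lt_of_le_of_lt (by positivity) hl
  have hpow : ∀ {r : ℝ}, 1 ≤ r → V ^ (1 / r) ≤ max (V ^ (1 / a)) (V ^ (1 / b)) →
      (l⁻¹) ^ r * V ≤ (2 * C)⁻¹ := fun hr hVr =>
    inv_rpow_mul_le_inv hl0 hr (by linarith) ENNReal.toReal_nonneg
      ((mul_le_mul_of_nonneg_left hVr (by positivity)).trans hl.le)
  have hCV : C * ((l⁻¹) ^ a + (l⁻¹) ^ b) * V ≤ 1 := by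
    have h2C : C * (2 * (2 * C)⁻¹) = 1 := by field_simp
    nlinarith [hpow ha (le_max_left _ _), hpow hb (le_max_right _ _)]
  refine ⟨hl0, ?_⟩
  calc ∫⁻ x, ENNReal.ofReal (Φ x (|B.indicator (fun _ => (1 : ℝ)) x| / l))
      = ∫⁻ x in B, ENNReal.ofReal (Φ x l⁻¹) := lintegral_ofReal_indicator_div hΦ0 hB l
    _ ≤ ∫⁻ x in B, ENNReal.ofReal (C * ((l⁻¹) ^ a + (l⁻¹) ^ b)) :=
        lintegral_mono_ae (ae_restrict_of_ae (hΦ.mono fun x hx =>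
          ENNReal.ofReal_le_ofReal (hx _ (inv_pos.2 hl0))))
    _ = ENNReal.ofReal (C * ((l⁻¹) ^ a + (l⁻¹) ^ b) * V) := by
        rw [setLIntegral_const, ENNReal.ofReal_mul (p := C * _) (by positivity),
          ENNReal.ofReal_toReal hBfin.ne]
    _ ≤ 1 := ENNReal.ofReal_le_one.2 hCV

lemma le_luxNorm_indicator {c : ℝ} (ha : 0 < a) (hb : 0 < b) (hc : 0 ≤ c)
    (hΦ0 : ∀ x, Φ x 0 = 0) (hΦ : ∀ᵐ x, ∀ u, 0 < u → c * min (u ^ a) (u ^ b) ≤ Φ x u)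
    (hB : MeasurableSet B) (hBfin : volume B < ⊤)
    (hne : (luxAdmissible Φ (B.indicator fun _ => 1)).Nonempty) :
    min (c ^ (1 / a)) (c ^ (1 / b)) * min ((volume B).toReal ^ (1 / a)) ((volume B).toReal ^ (1 / b))
      ≤ luxNorm Φ (B.indicator fun _ => 1) := by
  set V := (volume B).toReal
  have hV : 0 ≤ V := ENNReal.toReal_nonneg
  rw [luxNorm_eq_sInf]
  refine le_csInf hne fun l ⟨hl, hmod⟩ => ?_
  have hmin : c * min ((l⁻¹) ^ a) ((l⁻¹) ^ b) * V ≤ 1 := by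
    have hlow : ENNReal.ofReal (c * min ((l⁻¹) ^ a) ((l⁻¹) ^ b) * V) ≤
        ∫⁻ x in B, ENNReal.ofReal (Φ x l⁻¹) := by
      rw [ENNReal.ofReal_mul (by positivity), ENNReal.ofReal_toReal hBfin.ne,
        ← setLIntegral_const]
      exact lintegral_mono_ae (ae_restrict_of_ae (hΦ.mono fun x hx =>
        ENNReal.ofReal_le_ofReal (hx _ (inv_pos.2 hl))))
    rw [lintegral_ofReal_indicator_div hΦ0 hB] at hmod
    exact ENNReal.ofReal_le_one.1 (hlow.trans hmod)
  rcases min_choice ((l⁻¹) ^ a) ((l⁻¹) ^ b) with h | h <;> rw [h] at hmin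
  · exact (mul_le_mul (min_le_left _ _) (min_le_left _ _) (by positivity) (by positivity)).trans
      (rpow_one_div_mul_le_of_mul_inv_rpow_mul_le_one hl ha hc hV hmin)
  · exact (mul_le_mul (min_le_right _ _) (min_le_right _ _) (by positivity) (by positivity)).trans
      (rpow_one_div_mul_le_of_mul_inv_rpow_mul_le_one hl hb hc hV hmin)

end Luxemburg

theorem statement5_general
    {d : ℕ}
    (p q : EuclideanSpace ℝ (Fin d) → ℝ → ℝ)
    (μ : EuclideanSpace ℝ (Fin d) → ℝ)
    (h H : EuclideanSpace ℝ (Fin d) → ℝ → ℝ)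
    (pm pp qm qp : ℝ)
    (hp_cont : ∀ x, ContinuousOn (p x) (Set.Ici 0))
    (hq_cont : ∀ x, ContinuousOn (q x) (Set.Ici 0))
    (hpm2 : 2 ≤ pm)
    (hqm2 : 2 ≤ qm) (hqmp : qm ≤ qp)
    (hpbd : ∀ᵐ x ∂(volume : Measure (EuclideanSpace ℝ (Fin d))), ∀ t, 0 ≤ t → pm ≤ p x t ∧ p x t ≤ pp)
    (hqbd : ∀ᵐ x ∂(volume : Measure (EuclideanSpace ℝ (Fin d))), ∀ t, 0 ≤ t → qm ≤ q x t ∧ q x t ≤ qp)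
    (hpq : ∀ᵐ x ∂(volume : Measure (EuclideanSpace ℝ (Fin d))), ∀ t, 0 ≤ t →
      p x t < q x t ∧ q x t < (d : ℝ) * pm / ((d : ℝ) - pm))
    (hμ0 : ∀ x, 0 ≤ μ x) (hμbd : ∃ M : ℝ, ∀ x, μ x ≤ M)
    (hhdef : ∀ x t, 0 < t → h x t = t ^ (p x t - 1) + μ x * t ^ (q x t - 1))
    (hHdef : ∀ x t, H x t = ∫ s in (0:ℝ)..|t|, h x s)
    :
    ∃ C₁ > (0:ℝ), ∃ C₂ > (0:ℝ),
      ∀ B : Set (EuclideanSpace ℝ (Fin d)), MeasurableSet B → volume B < ⊤ →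
        C₁ * min ((volume B).toReal ^ (1 / pm)) ((volume B).toReal ^ (1 / qp)) ≤
            luxNorm H (B.indicator fun _ => (1:ℝ)) ∧
          luxNorm H (B.indicator fun _ => (1:ℝ)) ≤
            C₂ * max ((volume B).toReal ^ (1 / pm)) ((volume B).toReal ^ (1 / qp)) := by
  obtain ⟨M, hM⟩ := hμbd
  have hM0 : 0 ≤ M := (hμ0 0).trans (hM 0)
  have hqp_inv : 0 < qp⁻¹ := inv_pos.2 (by linarith)
  have hH0 : ∀ x, H x 0 = 0 := fun x => by
    rw [hHdef, abs_zero, intervalIntegral.integral_same]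
  have hH : ∀ x u, 0 ≤ u → H x u = ∫ s in (0 : ℝ)..u, phaseDensity (p x) (q x) (μ x) s :=
    fun x u hu => by
      rw [hHdef, abs_of_nonneg hu]
      exact intervalIntegral.integral_congr_ae
        (.of_forall fun s hs => hhdef x s (uIoc_of_le hu ▸ hs).1)
  have hexp : ∀ᵐ x, ∀ t, 0 ≤ t → p x t ∈ Icc pm qp ∧ q x t ∈ Icc pm qp := by
    filter_upwards [hpbd, hqbd, hpq] with x hpx hqx hpqx t ht
    obtain ⟨⟨hp, -⟩, ⟨-, hq⟩, hlt, -⟩ := And.intro (hpx t ht) (And.intro (hqx t ht) (hpqx t ht))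
    exact ⟨⟨hp, hlt.le.trans hq⟩, ⟨hp.trans hlt.le, hq⟩⟩
  have hupper : ∀ᵐ x, ∀ u, 0 < u → H x u ≤ (1 + M) * (u ^ pm + u ^ qp) :=
    hexp.mono fun x hx u hu => (hH x u hu.le).trans_le <|
      integral_phaseDensity_le (hp_cont x) (hq_cont x) (by linarith) (fun t ht => (hx t ht).1)
        (fun t ht => (hx t ht).2) (hμ0 x) (hM x) hu.le
  have hlower : ∀ᵐ x, ∀ u, 0 < u → qp⁻¹ * min (u ^ pm) (u ^ qp) ≤ H x u :=
    hexp.mono fun x hx u hu => (hH x u hu.le).symm ▸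
      le_integral_phaseDensity (hp_cont x) (hq_cont x) (by linarith) (fun t ht => (hx t ht).1)
        (fun t ht => (hx t ht).2) (hμ0 x) hu
  have hadm := fun B (hB : MeasurableSet B) (hBfin : volume B < ⊤) =>
    Ioi_subset_luxAdmissible_indicator (by linarith) (by linarith) (by linarith) hH0 hupper hB hBfin
  refine ⟨min ((qp⁻¹) ^ (1 / pm)) ((qp⁻¹) ^ (1 / qp)),
    lt_min (rpow_pos_of_pos hqp_inv _) (rpow_pos_of_pos hqp_inv _), 2 * (1 + M), by linarith,
    fun B hB hBfin => ⟨?_, luxNorm_le_of_Ioi_subset (hadm B hB hBfin)⟩⟩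
  exact le_luxNorm_indicator (by linarith) (by linarith) hqp_inv.le hH0 hlower hB hBfin
    ⟨_, hadm B hB hBfin (mem_Ioi.2 (lt_add_one _))⟩

theorem statement5
    {d : ℕ} (hd : 3 ≤ d)
    (p q : EuclideanSpace ℝ (Fin d) → ℝ → ℝ)
    (μ : EuclideanSpace ℝ (Fin d) → ℝ)
    (h H : EuclideanSpace ℝ (Fin d) → ℝ → ℝ)
    (pm pp qm qp : ℝ)
    (hp_meas : ∀ t : ℝ, 0 ≤ t → Measurable fun x => p x t)
    (hq_meas : ∀ t : ℝ, 0 ≤ t → Measurable fun x => q x t)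
    (hp_cont : ∀ x, ContinuousOn (p x) (Set.Ici 0))
    (hq_cont : ∀ x, ContinuousOn (q x) (Set.Ici 0))
    (hpm2 : 2 ≤ pm) (hpmp : pm ≤ pp) (hppd : pp < (d : ℝ))
    (hqm2 : 2 ≤ qm) (hqmp : qm ≤ qp)
    (hpbd : ∀ᵐ x ∂(volume : Measure (EuclideanSpace ℝ (Fin d))), ∀ t, 0 ≤ t → pm ≤ p x t ∧ p x t ≤ pp)
    (hqbd : ∀ᵐ x ∂(volume : Measure (EuclideanSpace ℝ (Fin d))), ∀ t, 0 ≤ t → qm ≤ q x t ∧ q x t ≤ qp)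
    (hpq : ∀ᵐ x ∂(volume : Measure (EuclideanSpace ℝ (Fin d))), ∀ t, 0 ≤ t →
      p x t < q x t ∧ q x t < (d : ℝ) * pm / ((d : ℝ) - pm))
    (hp1 : ∀ x, ∀ t ∈ Set.Icc (0:ℝ) 1, p x t = p x 1)
    (hq1 : ∀ x, ∀ t ∈ Set.Icc (0:ℝ) 1, q x t = q x 1)
    (hpmono : ∀ x, MonotoneOn (p x) (Set.Ici 1))
    (hqmono : ∀ x, MonotoneOn (q x) (Set.Ici 1))
    (hμ0 : ∀ x, 0 ≤ μ x) (hμbd : ∃ M : ℝ, ∀ x, μ x ≤ M)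
    (hμlip : ∃ K : NNReal, LipschitzWith K μ)
    (hh0 : ∀ x, h x 0 = 0)
    (hhdef : ∀ x t, 0 < t → h x t = t ^ (p x t - 1) + μ x * t ^ (q x t - 1))
    (hHdef : ∀ x t, H x t = ∫ s in (0:ℝ)..|t|, h x s)
    :
    ∃ C₁ > (0:ℝ), ∃ C₂ > (0:ℝ),
      ∀ B : Set (EuclideanSpace ℝ (Fin d)), MeasurableSet B → volume B < ⊤ →
        C₁ * min ((volume B).toReal ^ (1 / pm)) ((volume B).toReal ^ (1 / qp)) ≤
            luxNorm H (B.indicator fun _ => (1:ℝ)) ∧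
          luxNorm H (B.indicator fun _ => (1:ℝ)) ≤
            C₂ * max ((volume B).toReal ^ (1 / pm)) ((volume B).toReal ^ (1 / qp)) :=
  statement5_general p q μ h H pm pp qm qp hp_cont hq_cont hpm2 hqm2 hqmp hpbd hqbd hpq hμ0 hμbd
    hhdef hHdef
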